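/- arXiv:2404.13735 — 2 statements merged into one kernel-verified Lean document; each statement's English description precedes it below -/
import Mathlib

section
/- Suppose m: ℝ² → ℝ, s: ℝ² → ℝ, r: ℝ² → ℝ, h: ℝ² → ℝ and v: ℝ³ → ℝ are continuously differentiable, v(x, w, d) = m(x, s(r(x, w), d)) for all (x, w, d), and x = h(w, r(x, w)) identically. If ∂s/∂η · ∂r/∂w* ≠ 0 and ∂m/∂ε ≠ 0 at the relevant points, then ∂m/∂x evaluated at (x, s(r(x,w*),δ)) equals ∂v/∂x + (∂v/∂w*) / (∂h/∂w*) where ∂h/∂w* is evaluated at (w*, r(x, w*)) and satisfies ∂h/∂w* = − (∂r/∂w*)/(∂r/∂x). -/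
/-!
Differentiating the identity `x = h w (r x w)` in `w` and in `x` gives
`∂h/∂w + ∂r/∂w · ∂h/∂η = 0` and `∂r/∂x · ∂h/∂η = 1`, hence `∂h/∂w = -(∂r/∂w) / (∂r/∂x)`.
By the chain rule `∂v/∂x = ∂m/∂x + ∂r/∂x · P` and `∂v/∂w = ∂r/∂w · P` with the unobserved
`P = ∂s/∂η · ∂m/∂ε`; dividing the latter by `∂h/∂w` gives `-(∂r/∂x) · P`, which cancels `P`.
-/

open Function

section
variable {𝕜 E : Type*} [NontriviallyNormedField 𝕜] [NormedAddCommGroup E] [NormedSpace 𝕜 E]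
  {f : 𝕜 → 𝕜 → E}

theorem HasFDerivAt.hasDerivAt_comp₂ {L : 𝕜 × 𝕜 →L[𝕜] E} {γ₁ γ₂ : 𝕜 → 𝕜} {t γ₁' γ₂' : 𝕜}
    (hL : HasFDerivAt (uncurry f) L (γ₁ t, γ₂ t))
    (h₁ : HasDerivAt γ₁ γ₁' t) (h₂ : HasDerivAt γ₂ γ₂' t) :
    HasDerivAt (fun u => f (γ₁ u) (γ₂ u)) (L (γ₁', γ₂')) t :=
  hL.comp_hasDerivAt (f := fun u => (γ₁ u, γ₂ u)) t (h₁.prodMk h₂)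

theorem HasFDerivAt.deriv_partial_fst {L : 𝕜 × 𝕜 →L[𝕜] E} {x y : 𝕜}
    (hL : HasFDerivAt (uncurry f) L (x, y)) :
    deriv (fun u => f u y) x = L (1, 0) :=
  (hL.hasDerivAt_comp₂ (γ₁ := id) (γ₂ := fun _ => y) (hasDerivAt_id x) (hasDerivAt_const x y)).deriv

theorem HasFDerivAt.deriv_partial_snd {L : 𝕜 × 𝕜 →L[𝕜] E} {x y : 𝕜}
    (hL : HasFDerivAt (uncurry f) L (x, y)) :
    deriv (fun u => f x u) y = L (0, 1) :=
  (hL.hasDerivAt_comp₂ (γ₁ := fun _ => x) (γ₂ := id) (hasDerivAt_const y x) (hasDerivAt_id y)).deriv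

variable {g₁ g₂ : 𝕜 → 𝕜} {a : 𝕜}

theorem DifferentiableAt.comp₂ (hf : DifferentiableAt 𝕜 (uncurry f) (g₁ a, g₂ a))
    (hg₁ : DifferentiableAt 𝕜 g₁ a) (hg₂ : DifferentiableAt 𝕜 g₂ a) :
    DifferentiableAt 𝕜 (fun u => f (g₁ u) (g₂ u)) a :=
  (hf.hasFDerivAt.hasDerivAt_comp₂ hg₁.hasDerivAt hg₂.hasDerivAt).differentiableAt

theorem deriv_comp₂ (hf : DifferentiableAt 𝕜 (uncurry f) (g₁ a, g₂ a))
    (hg₁ : DifferentiableAt 𝕜 g₁ a) (hg₂ : DifferentiableAt 𝕜 g₂ a) :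
    deriv (fun u => f (g₁ u) (g₂ u)) a =
      deriv g₁ a • deriv (fun u => f u (g₂ a)) (g₁ a) +
        deriv g₂ a • deriv (fun u => f (g₁ a) u) (g₂ a) := by
  have hL := hf.hasFDerivAt
  rw [(hL.hasDerivAt_comp₂ hg₁.hasDerivAt hg₂.hasDerivAt).deriv, hL.deriv_partial_fst,
    hL.deriv_partial_snd, ← map_smul, ← map_smul, ← map_add]
  simp

end

section
variable {𝕜 : Type*} [NontriviallyNormedField 𝕜] {h r : 𝕜 → 𝕜 → 𝕜}
  (hinv : ∀ w', LeftInverse (h w') (fun x' => r x' w')) {x w : 𝕜}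
  (hh : DifferentiableAt 𝕜 (uncurry h) (w, r x w)) (hr : DifferentiableAt 𝕜 (uncurry r) (x, w))
include hinv hh hr

theorem deriv_mul_deriv_eq_one_of_leftInverse :
    deriv (fun u => r u w) x * deriv (fun u => h w u) (r x w) = 1 := by
  have hchain := deriv_comp₂ (f := h) (g₁ := fun _ => w) (g₂ := fun u => r u w) hh
    (differentiableAt_const w) (hr.comp₂ differentiableAt_id (differentiableAt_const w))
  have hid : (fun u => h w (r u w)) = id := funext fun u => hinv w u
  rw [hid, deriv_id, deriv_const, zero_smul, zero_add, smul_eq_mul] at hchain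
  exact hchain.symm

theorem deriv_add_deriv_mul_deriv_eq_zero_of_leftInverse :
    deriv (fun u => h u (r x w)) w +
      deriv (fun u => r x u) w * deriv (fun u => h w u) (r x w) = 0 := by
  have hchain := deriv_comp₂ (f := h) (g₁ := fun u => u) (g₂ := fun u => r x u) hh
    differentiableAt_fun_id (hr.comp₂ (differentiableAt_const x) differentiableAt_id)
  have hconst : (fun u => h u (r x u)) = fun _ => x := funext fun u => hinv u x
  rw [hconst, deriv_const, deriv_id'', one_smul, smul_eq_mul] at hchain
  exact hchain.symm

theorem deriv_eq_neg_div_of_leftInverse :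
    deriv (fun u => h u (r x w)) w = -deriv (fun u => r x u) w / deriv (fun u => r u w) x := by
  have hone := deriv_mul_deriv_eq_one_of_leftInverse hinv hh hr
  rw [eq_div_iff (left_ne_zero_of_mul_eq_one hone)]
  linear_combination deriv (fun u => r u w) x *
    deriv_add_deriv_mul_deriv_eq_zero_of_leftInverse hinv hh hr - deriv (fun u => r x u) w * hone

end

section
variable {𝕜 : Type*} [NontriviallyNormedField 𝕜] {m s r : 𝕜 → 𝕜 → 𝕜}
  (hm : Differentiable 𝕜 (uncurry m)) (hs : Differentiable 𝕜 (uncurry s))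
  (hr : Differentiable 𝕜 (uncurry r)) (x w d : 𝕜)
include hm hs hr

theorem deriv_fst_comp_comp :
    deriv (fun u => m u (s (r u w) d)) x = deriv (fun u => m u (s (r x w) d)) x +
      deriv (fun u => r u w) x * deriv (fun u => s u d) (r x w) *
        deriv (fun u => m x u) (s (r x w) d) := by
  have hrx : DifferentiableAt 𝕜 (fun u => r u w) x :=
    (hr _).comp₂ differentiableAt_fun_id (differentiableAt_const w)
  rw [deriv_comp₂ (g₁ := fun u => u) (hm _) differentiableAt_fun_id
      ((hs _).comp₂ hrx (differentiableAt_const d)),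
    deriv_comp₂ (f := s) (g₂ := fun _ => d) (hs _) hrx (differentiableAt_const d)]
  simp only [deriv_id'', deriv_const, smul_eq_mul]
  ring

theorem deriv_snd_comp_comp :
    deriv (fun u => m x (s (r x u) d)) w = deriv (fun u => r x u) w *
      deriv (fun u => s u d) (r x w) * deriv (fun u => m x u) (s (r x w) d) := by
  have hrw : DifferentiableAt 𝕜 (fun u => r x u) w :=
    (hr _).comp₂ (differentiableAt_const x) differentiableAt_fun_id
  rw [deriv_comp₂ (g₁ := fun _ => x) (hm _) (differentiableAt_const x)
      ((hs _).comp₂ hrw (differentiableAt_const d)),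
    deriv_comp₂ (f := s) (g₂ := fun _ => d) (hs _) hrw (differentiableAt_const d)]
  simp only [deriv_const, smul_eq_mul]
  ring

end

theorem stmt6_general
    (m s r h : ℝ → ℝ → ℝ) (v : ℝ → ℝ → ℝ → ℝ) (x w d : ℝ)
    (hm : ContDiff ℝ 1 fun p : ℝ × ℝ => m p.1 p.2)
    (hscd : ContDiff ℝ 1 fun p : ℝ × ℝ => s p.1 p.2)
    (hrcd : ContDiff ℝ 1 fun p : ℝ × ℝ => r p.1 p.2)
    (hhcd : ContDiff ℝ 1 fun p : ℝ × ℝ => h p.1 p.2)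
    (hveq : ∀ x' w' d', v x' w' d' = m x' (s (r x' w') d'))
    (hheq : ∀ x' w', x' = h w' (r x' w'))
    (hsr : deriv (fun u => s u d) (r x w) * deriv (fun u => r x u) w ≠ 0) :
    deriv (fun u => h u (r x w)) w =
        -(deriv (fun u => r x u) w) / deriv (fun u => r u w) x ∧
      deriv (fun u => m u (s (r x w) d)) x =
        deriv (fun u => v u w d) x +
          deriv (fun u => v x u d) w / deriv (fun u => h u (r x w)) w := by
  have hinv : ∀ w', LeftInverse (h w') (fun x' => r x' w') := fun w' x' => (hheq x' w').symm
  have hh := hhcd.differentiable one_ne_zero (w, r x w)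
  have hr := hrcd.differentiable one_ne_zero
  have hhw := deriv_eq_neg_div_of_leftInverse hinv hh (hr (x, w))
  have hrx := left_ne_zero_of_mul_eq_one (deriv_mul_deriv_eq_one_of_leftInverse hinv hh (hr (x, w)))
  have hrw := right_ne_zero_of_mul hsr
  refine ⟨hhw, ?_⟩
  have hm := hm.differentiable one_ne_zero
  have hs := hscd.differentiable one_ne_zero
  simp_rw [hveq]
  rw [deriv_fst_comp_comp hm hs hr, deriv_snd_comp_comp hm hs hr, hhw]
  field_simp
  ring

theorem stmt6
    (m s r h : ℝ → ℝ → ℝ) (v : ℝ → ℝ → ℝ → ℝ) (x w d : ℝ)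
    (hm : ContDiff ℝ 1 fun p : ℝ × ℝ => m p.1 p.2)
    (hscd : ContDiff ℝ 1 fun p : ℝ × ℝ => s p.1 p.2)
    (hrcd : ContDiff ℝ 1 fun p : ℝ × ℝ => r p.1 p.2)
    (hhcd : ContDiff ℝ 1 fun p : ℝ × ℝ => h p.1 p.2)
    (hvcd : ContDiff ℝ 1 fun p : ℝ × ℝ × ℝ => v p.1 p.2.1 p.2.2)
    (hveq : ∀ x' w' d', v x' w' d' = m x' (s (r x' w') d'))
    (hheq : ∀ x' w', x' = h w' (r x' w'))
    (hsr : deriv (fun u => s u d) (r x w) * deriv (fun u => r x u) w ≠ 0)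
    (hme : deriv (fun u => m x u) (s (r x w) d) ≠ 0) :
    deriv (fun u => h u (r x w)) w =
        -(deriv (fun u => r x u) w) / deriv (fun u => r u w) x ∧
      deriv (fun u => m u (s (r x w) d)) x =
        deriv (fun u => v u w d) x +
          deriv (fun u => v x u d) w / deriv (fun u => h u (r x w)) w :=
  stmt6_general m s r h v x w d hm hscd hrcd hhcd hveq hheq hsr
end

section
/- Let W*, ΔW₁, ΔW₂ be real random variables with W₁ = W* + ΔW₁, W₂ = W* + ΔW₂, E[ΔW₁ | W*, ΔW₂] = 0, ΔW₂ independent of W*, E|W₁| < ∞, and E[e^{iξW₂}] ≠ 0. Then E[W₁ e^{iξW₂}] / E[e^{iξW₂}] = E[W* e^{iξW*}] / E[e^{iξW*}] = −i (d/dξ) φ_{W*}(ξ) / φ_{W*}(ξ), where φ_{W*}(ξ) = E[e^{iξW*}]. -/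
/-!
Writing `e(x) = exp (i ξ x)`, classical measurement error gives `e(W₂) = e(W*) e(ΔW₂)`, so
independence factors `E[e(ΔW₂)]` out of both `E[e(W₂)]` and `E[W* e(W₂)]`, and it cancels in the
ratio. The error `ΔW₁` contributes nothing to the numerator because `e(W₂)` is a bounded function
of `(W*, ΔW₂)`, on which `ΔW₁` has conditional mean zero. Finally `E[W* e(W*)] = -i φ'(ξ)` is the
derivative of the characteristic function, which exists as `W* = W₁ - ΔW₁` is integrable.
-/

open MeasureTheory ProbabilityTheory Complex

section CondExp

variable {Ω : Type*} {mΩ : MeasurableSpace Ω} {μ : Measure Ω}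

lemma integral_smul_eq_zero_of_condExp_eq_zero {E : Type*} [NormedAddCommGroup E]
    [NormedSpace ℝ E] [CompleteSpace E] {m : MeasurableSpace Ω} (hm : m ≤ mΩ)
    [SigmaFinite (μ.trim hm)] {f : Ω → ℝ} {g : Ω → E} (hf : Integrable f μ)
    (hfg : Integrable (f • g) μ) (hg : AEStronglyMeasurable[m] g μ) (hcond : μ[f | m] =ᵐ[μ] 0) :
    ∫ ω, f ω • g ω ∂μ = 0 := by
  calc ∫ ω, f ω • g ω ∂μ = ∫ ω, μ[f • g | m] ω ∂μ := (integral_condExp hm).symm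
    _ = ∫ ω, (μ[f | m] • g) ω ∂μ :=
        integral_congr_ae (condExp_smul_of_aestronglyMeasurable_right hf hfg hg)
    _ = 0 := by
        rw [integral_congr_ae (g := 0) (by filter_upwards [hcond] with ω hω; simp [hω])]
        simp

lemma integral_ofReal_mul_comp_eq_zero_of_condExp_eq_zero [IsFiniteMeasure μ] {β : Type*}
    [MeasurableSpace β] {V : Ω → β} (hV : Measurable V) {f : Ω → ℝ} (hf : Integrable f μ)
    (hcond : μ[f | MeasurableSpace.comap V inferInstance] =ᵐ[μ] 0) {h : β → ℂ}
    (hh : Measurable h) {C : ℝ} (hC : ∀ b, ‖h b‖ ≤ C) :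
    ∫ ω, (f ω : ℂ) * h (V ω) ∂μ = 0 := by
  simp_rw [← real_smul]
  exact integral_smul_eq_zero_of_condExp_eq_zero hV.comap_le hf
    (hf.smul_bdd C (hh.comp hV).aestronglyMeasurable (ae_of_all _ fun ω => hC (V ω)))
    (hh.comp (comap_measurable V)).aestronglyMeasurable hcond

end CondExp

section CharFun

variable {Ω : Type*} [MeasurableSpace Ω] {P : Measure Ω} {X Y : Ω → ℝ}

lemma norm_exp_I_mul_ofReal_mul_ofReal (t x : ℝ) : ‖exp (I * t * x)‖ = 1 := by
  rw [mul_assoc, ← ofReal_mul, norm_exp_I_mul_ofReal]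

lemma MeasureTheory.Integrable.ofReal_mul_exp_I_mul (hX : Integrable X P)
    (hY : AEMeasurable Y P) (t : ℝ) :
    Integrable (fun ω => (X ω : ℂ) * exp (I * t * Y ω)) P :=
  hX.ofReal.mul_bdd (c := 1) (by fun_prop)
    (ae_of_all _ fun ω => (norm_exp_I_mul_ofReal_mul_ofReal t (Y ω)).le)

lemma integral_exp_I_mul_eq_charFun_map (hX : AEMeasurable X P) (t : ℝ) :
    ∫ ω, exp (I * t * X ω) ∂P = charFun (P.map X) t := by
  rw [charFun_apply_real, integral_map hX (by fun_prop)]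
  simp only [mul_comm I, mul_right_comm _ I]

lemma deriv_charFun_real {μ : Measure ℝ} [IsFiniteMeasure μ] (hμ : Integrable id μ) (t : ℝ) :
    deriv (charFun μ) t = I * ∫ x, (x : ℂ) * exp (t * x * I) ∂μ := by
  rw [← iteratedDeriv_one,
    iteratedDeriv_charFun (by exact_mod_cast memLp_one_iff_integrable.mpr hμ)]
  simp

lemma deriv_integral_exp_I_mul [IsFiniteMeasure P] (hXm : AEMeasurable X P)
    (hX : Integrable X P) (t : ℝ) :
    deriv (fun u : ℝ => ∫ ω, exp (I * u * X ω) ∂P) t =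
      I * ∫ ω, (X ω : ℂ) * exp (I * t * X ω) ∂P := by
  simp_rw [integral_exp_I_mul_eq_charFun_map hXm]
  rw [deriv_charFun_real ((integrable_map_measure (by fun_prop) hXm).mpr hX),
    integral_map hXm (by fun_prop)]
  simp only [mul_comm I, mul_right_comm _ I]

lemma ProbabilityTheory.IndepFun.integral_mul_exp_I_mul_add (hXY : IndepFun X Y P)
    (hX : AEMeasurable X P) (hY : AEMeasurable Y P) {g : ℝ → ℂ} (hg : Measurable g) (t : ℝ) :
    ∫ ω, g (X ω) * exp (I * t * ((X ω + Y ω : ℝ) : ℂ)) ∂P =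
      (∫ ω, g (X ω) * exp (I * t * X ω) ∂P) * ∫ ω, exp (I * t * Y ω) ∂P := by
  have hsplit : ∀ ω, g (X ω) * exp (I * t * ((X ω + Y ω : ℝ) : ℂ)) =
      g (X ω) * exp (I * t * X ω) * exp (I * t * Y ω) := by
    intro ω
    rw [mul_assoc (g (X ω)), ← exp_add]
    push_cast
    ring_nf
  simp_rw [hsplit]
  exact hXY.integral_fun_comp_mul_comp (f := fun x : ℝ => g x * exp (I * t * x))
    (g := fun y : ℝ => exp (I * t * y)) hX hY (by fun_prop) (by fun_prop)

end CharFun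

theorem stmt8_general
    {Ω : Type*} [MeasurableSpace Ω] (P : Measure Ω) [IsProbabilityMeasure P]
    (Wstar ΔW1 ΔW2 W1 W2 : Ω → ℝ)
    (hWm : Measurable Wstar) (hΔ2m : Measurable ΔW2)
    (hW1 : ∀ ω, W1 ω = Wstar ω + ΔW1 ω)
    (hW2 : ∀ ω, W2 ω = Wstar ω + ΔW2 ω)
    (hΔ1int : Integrable ΔW1 P)
    (hcond : P[ΔW1 |
      MeasurableSpace.comap (fun ω => (Wstar ω, ΔW2 ω)) inferInstance] =ᵐ[P] 0)
    (hindep : IndepFun ΔW2 Wstar P)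
    (hW1int : Integrable W1 P)
    (ξ : ℝ)
    (hne : (∫ ω, Complex.exp (Complex.I * (ξ : ℂ) * (W2 ω : ℂ)) ∂P) ≠ 0) :
    (∫ ω, (W1 ω : ℂ) * Complex.exp (Complex.I * (ξ : ℂ) * (W2 ω : ℂ)) ∂P) /
        (∫ ω, Complex.exp (Complex.I * (ξ : ℂ) * (W2 ω : ℂ)) ∂P) =
      (∫ ω, (Wstar ω : ℂ) * Complex.exp (Complex.I * (ξ : ℂ) * (Wstar ω : ℂ)) ∂P) /
        (∫ ω, Complex.exp (Complex.I * (ξ : ℂ) * (Wstar ω : ℂ)) ∂P) ∧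
    (∫ ω, (W1 ω : ℂ) * Complex.exp (Complex.I * (ξ : ℂ) * (W2 ω : ℂ)) ∂P) /
        (∫ ω, Complex.exp (Complex.I * (ξ : ℂ) * (W2 ω : ℂ)) ∂P) =
      -Complex.I *
          deriv (fun u : ℝ => ∫ ω, Complex.exp (Complex.I * (u : ℂ) * (Wstar ω : ℂ)) ∂P) ξ /
        (∫ ω, Complex.exp (Complex.I * (ξ : ℂ) * (Wstar ω : ℂ)) ∂P) := by
  obtain rfl : W1 = Wstar + ΔW1 := funext hW1
  obtain rfl : W2 = Wstar + ΔW2 := funext hW2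
  simp only [Pi.add_apply, ofReal_add, add_mul] at hne ⊢
  have hWint : Integrable Wstar P := by simpa using hW1int.sub hΔ1int
  have hW2m : AEMeasurable (fun ω => Wstar ω + ΔW2 ω) P := by fun_prop
  have hden := hindep.symm.integral_mul_exp_I_mul_add hWm.aemeasurable hΔ2m.aemeasurable
    (g := 1) measurable_const ξ
  have herr : ∫ ω, (ΔW1 ω : ℂ) * exp (I * ξ * ((Wstar ω + ΔW2 ω : ℝ) : ℂ)) ∂P = 0 :=
    integral_ofReal_mul_comp_eq_zero_of_condExp_eq_zero (hWm.prodMk hΔ2m) hΔ1int hcond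
      (h := fun p : ℝ × ℝ => exp (I * ξ * ((p.1 + p.2 : ℝ) : ℂ))) (by fun_prop)
      (fun p => (norm_exp_I_mul_ofReal_mul_ofReal ξ (p.1 + p.2)).le)
  have hnum := hindep.symm.integral_mul_exp_I_mul_add hWm.aemeasurable hΔ2m.aemeasurable
    measurable_ofReal ξ
  simp only [Pi.one_apply, one_mul, ofReal_add] at hden herr hnum
  rw [integral_add (by simpa using hWint.ofReal_mul_exp_I_mul hW2m ξ)
    (by simpa using hΔ1int.ofReal_mul_exp_I_mul hW2m ξ), herr, add_zero, hnum, hden,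
    mul_div_mul_right _ _ (right_ne_zero_of_mul (hden ▸ hne))]
  refine ⟨rfl, ?_⟩
  rw [deriv_integral_exp_I_mul hWm.aemeasurable hWint, ← mul_assoc, neg_mul, I_mul_I, neg_neg,
    one_mul]

theorem stmt8
    {Ω : Type*} [MeasurableSpace Ω] (P : Measure Ω) [IsProbabilityMeasure P]
    (Wstar ΔW1 ΔW2 W1 W2 : Ω → ℝ)
    (hWm : Measurable Wstar) (hΔ1m : Measurable ΔW1) (hΔ2m : Measurable ΔW2)
    (hW1 : ∀ ω, W1 ω = Wstar ω + ΔW1 ω)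
    (hW2 : ∀ ω, W2 ω = Wstar ω + ΔW2 ω)
    (hΔ1int : Integrable ΔW1 P)
    (hcond : P[ΔW1 |
      MeasurableSpace.comap (fun ω => (Wstar ω, ΔW2 ω)) inferInstance] =ᵐ[P] 0)
    (hindep : IndepFun ΔW2 Wstar P)
    (hW1int : Integrable W1 P)
    (ξ : ℝ)
    (hne : (∫ ω, Complex.exp (Complex.I * (ξ : ℂ) * (W2 ω : ℂ)) ∂P) ≠ 0) :
    (∫ ω, (W1 ω : ℂ) * Complex.exp (Complex.I * (ξ : ℂ) * (W2 ω : ℂ)) ∂P) /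
        (∫ ω, Complex.exp (Complex.I * (ξ : ℂ) * (W2 ω : ℂ)) ∂P) =
      (∫ ω, (Wstar ω : ℂ) * Complex.exp (Complex.I * (ξ : ℂ) * (Wstar ω : ℂ)) ∂P) /
        (∫ ω, Complex.exp (Complex.I * (ξ : ℂ) * (Wstar ω : ℂ)) ∂P) ∧
    (∫ ω, (W1 ω : ℂ) * Complex.exp (Complex.I * (ξ : ℂ) * (W2 ω : ℂ)) ∂P) /
        (∫ ω, Complex.exp (Complex.I * (ξ : ℂ) * (W2 ω : ℂ)) ∂P) =
      -Complex.I *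
          deriv (fun u : ℝ => ∫ ω, Complex.exp (Complex.I * (u : ℂ) * (Wstar ω : ℂ)) ∂P) ξ /
        (∫ ω, Complex.exp (Complex.I * (ξ : ℂ) * (Wstar ω : ℂ)) ∂P) :=
  stmt8_general P Wstar ΔW1 ΔW2 W1 W2 hWm hΔ2m hW1 hW2 hΔ1int hcond hindep hW1int ξ hne
end
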